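/- Let n ≥ 1, θ ∈ C_c^∞(ℝⁿ,ℝ), let E ⊆ ℝⁿ be measurable and K ⊂ ℝⁿ compact with dist(K,E) > 0. Then there exist constants C, c > 0 such that for all ε ∈ (0,1] and all u ∈ L²(ℝⁿ) with support contained in K, ‖T_ε^*(θ(η)·T_ε u)‖_{L²(E)} ≤ C e^{−c/ε} ‖u‖_{L²(ℝⁿ)}. -/

import Mathlib

open MeasureTheory Filter
open scoped Real Topology ENNReal

noncomputable section

abbrev Evec (n : ℕ) := EuclideanSpace ℝ (Fin n)

/-- real dot product -/
def dotR {n : ℕ} (v w : Evec n) : ℝ := ∑ i, v i * w i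

/-- the constant `c_n = 2^{-n/2} π^{-3n/4}` -/
def cFBI (n : ℕ) : ℝ := (2 : ℝ) ^ (-(n : ℝ) / 2) * Real.pi ^ (-(3 * (n : ℝ)) / 4)

/-- the FBI transform `T_ε u (y,η) = c_n ε^{-3n/4} ∫ u(x) e^{iη·(y−x)/ε − |y−x|²/(2ε)} dx` -/
def fbi {n : ℕ} (ε : ℝ) (u : Evec n → ℂ) (p : Evec n × Evec n) : ℂ :=
  ((cFBI n * ε ^ (-(3 * (n : ℝ)) / 4) : ℝ) : ℂ) *
    ∫ x : Evec n, u x *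
      Complex.exp ((Complex.I * (dotR p.2 (p.1 - x) : ℂ) - ((‖p.1 - x‖ ^ 2 : ℝ) : ℂ) / 2) / (ε : ℂ))

/-- the adjoint FBI transform
`T_ε^* f (x) = c_n ε^{-3n/4} ∫ f(y,η) e^{iη·(x−y)/ε − |x−y|²/(2ε)} dy dη` -/
def fbiAdj {n : ℕ} (ε : ℝ) (f : Evec n × Evec n → ℂ) (x : Evec n) : ℂ :=
  ((cFBI n * ε ^ (-(3 * (n : ℝ)) / 4) : ℝ) : ℂ) *
    ∫ p : Evec n × Evec n, f p *
      Complex.exp ((Complex.I * (dotR p.2 (x - p.1) : ℂ) - ((‖x - p.1‖ ^ 2 : ℝ) : ℂ) / 2) / (ε : ℂ))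

open Metric

namespace Stmt13
lemma gauss_integrable {b : ℝ} (hb : 0 < b) :
    Integrable (fun x : Evec n => Real.exp (-b * ‖x‖ ^ 2)) := by
  have h := (GaussianFourier.integrable_cexp_neg_mul_sq_norm_add (V := Evec n)
    (b := (b : ℂ)) (by simpa using hb) 0 0).norm
  refine h.congr ?_
  filter_upwards with v
  simp [Complex.norm_exp]
  left; norm_cast

lemma kernel_norm {ε r s : ℝ} (hε : 0 < ε) :
    ‖Complex.exp ((Complex.I * (r : ℂ) - ((s : ℝ) : ℂ) / 2) / (ε : ℂ))‖
      = Real.exp (-s / (2 * ε)) := by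
  have h : (Complex.I * (r : ℂ) - ((s : ℝ) : ℂ) / 2) / (ε : ℂ)
      = ((-s / (2 * ε) : ℝ) : ℂ) + ((r / ε : ℝ) : ℂ) * Complex.I := by
    have : (ε : ℂ) ≠ 0 := by exact_mod_cast hε.ne'
    field_simp
    push_cast
    field_simp
    ring
  rw [h, Complex.exp_add, norm_mul]
  simp only [Complex.norm_exp]
  rw [show ((-s / (2 * ε) : ℝ) : ℂ).re = -s / (2 * ε) from Complex.ofReal_re _]
  rw [show (((r / ε : ℝ) : ℂ) * Complex.I).re = 0 by simp]
  simp

lemma gauss_shift_integrable {b : ℝ} (hb : 0 < b) (y : Evec n) :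
    Integrable (fun x : Evec n => Real.exp (-b * ‖y - x‖ ^ 2)) :=
  (integrable_comp_sub_left (fun v : Evec n => Real.exp (-b * ‖v‖ ^ 2)) y).mpr
    (gauss_integrable hb)

lemma gauss_shift_integral (b : ℝ) (y : Evec n) :
    ∫ x : Evec n, Real.exp (-b * ‖y - x‖ ^ 2) = ∫ x : Evec n, Real.exp (-b * ‖x‖ ^ 2) :=
  integral_sub_left_eq_self (fun v : Evec n => Real.exp (-b * ‖v‖ ^ 2)) volume y

lemma gauss_shift_memℒp2 {b : ℝ} (hb : 0 < b) (y : Evec n) :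
    MemLp (fun x : Evec n => Real.exp (-b * ‖y - x‖ ^ 2)) 2 (volume : Measure (Evec n)) := by
  have hc : Continuous fun x : Evec n => Real.exp (-b * ‖y - x‖ ^ 2) := by continuity
  rw [memLp_two_iff_integrable_sq hc.aestronglyMeasurable]
  refine (gauss_shift_integrable (by positivity : (0:ℝ) < 2 * b) y).congr ?_
  filter_upwards with x
  rw [← Real.exp_nat_mul]
  congr 1; push_cast; ring

lemma l2_mul_integrable {f g : Evec n → ℝ} (hf : MemLp f 2 (volume : Measure (Evec n)))
    (hg : MemLp g 2 (volume : Measure (Evec n))) :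
    Integrable (fun x => f x * g x) (volume : Measure (Evec n)) := by
  have h12 : (1 : ℝ≥0∞) / 1 = 1 / 2 + 1 / 2 := by
    rw [one_div_one]
    exact (ENNReal.add_halves 1).symm
  have := (hg.smul hf : MemLp (f • g) 1 volume)
  exact memLp_one_iff_integrable.mp this

lemma pow_le_factorial_mul_exp {x : ℝ} (hx : 0 ≤ x) (k : ℕ) :
    x ^ k ≤ (k.factorial : ℝ) * Real.exp x := by
  have h1 : x ^ k / (k.factorial : ℝ) ≤ Real.exp x := by
    refine le_trans ?_ (Real.sum_le_exp_of_nonneg hx (k + 1))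
    exact Finset.single_le_sum (f := fun i => x ^ i / (i.factorial : ℝ))
      (fun i _ => by positivity) (Finset.self_mem_range_succ k)
  have hk : (0:ℝ) < (k.factorial : ℝ) := by positivity
  calc x ^ k = x ^ k / (k.factorial : ℝ) * (k.factorial : ℝ) := by field_simp
    _ ≤ Real.exp x * (k.factorial : ℝ) := by
        exact mul_le_mul_of_nonneg_right h1 hk.le
    _ = (k.factorial : ℝ) * Real.exp x := mul_comm _ _

lemma key_eps {b ε r : ℝ} {k : ℕ} (hb : 0 < b) (hε : 0 < ε) (hε1 : ε ≤ 1)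
    (hr : -(k : ℝ) ≤ r) :
    ε ^ r ≤ ((k.factorial : ℝ) * (b⁻¹) ^ k) * Real.exp (b / ε) := by
  calc ε ^ r ≤ ε ^ (-(k : ℝ)) := Real.rpow_le_rpow_of_exponent_ge hε hε1 hr
    _ = (ε⁻¹) ^ k := by
        rw [Real.rpow_neg hε.le, Real.rpow_natCast, inv_pow]
    _ = b⁻¹ ^ k * (b / ε) ^ k := by
        rw [← mul_pow]; congr 1; field_simp
    _ ≤ b⁻¹ ^ k * ((k.factorial : ℝ) * Real.exp (b / ε)) := by
        exact mul_le_mul_of_nonneg_left (pow_le_factorial_mul_exp (by positivity) k)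
          (by positivity)
    _ = ((k.factorial : ℝ) * (b⁻¹) ^ k) * Real.exp (b / ε) := by ring

lemma exp_ineq1 {ε d t : ℝ} (hε : 0 < ε) (hε1 : ε ≤ 1) (hd : d ^ 2 ≤ t) (ht : 0 ≤ t) :
    Real.exp (-t / (2 * ε)) ≤ Real.exp (-d ^ 2 / (4 * ε)) * Real.exp (-(1/4) * t) := by
  rw [← Real.exp_add]
  apply Real.exp_le_exp.mpr
  have h1 : d ^ 2 / (4 * ε) ≤ t / (4 * ε) := by gcongr
  have h2 : (1/4) * t ≤ t / (4 * ε) := by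
    have h : (1:ℝ)/4 ≤ 1/(4*ε) := one_div_le_one_div_of_le (by positivity) (by linarith)
    calc (1/4)*t ≤ (1/(4*ε))*t := mul_le_mul_of_nonneg_right h ht
      _ = t/(4*ε) := by ring
  have h3 : t / (4*ε) + t / (4*ε) = t/(2*ε) := by ring
  have main : d ^ 2 / (4 * ε) + (1/4) * t ≤ t / (2 * ε) := by linarith
  rw [neg_div, neg_div]
  linarith

lemma exp_ineq2 {ε dx dy s : ℝ} (hε : 0 < ε) (hε1 : ε ≤ 1) (hdx : 0 ≤ dx) (hdy : 0 ≤ dy)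
    (hs : 0 ≤ s) (htri : dx ≤ dy + s) :
    Real.exp (-dy^2/(4*ε)) * Real.exp (-s^2/(2*ε))
      ≤ Real.exp (-dx^2/(8*ε)) * Real.exp (-(1/4)*s^2) := by
  rw [← Real.exp_add, ← Real.exp_add]
  apply Real.exp_le_exp.mpr
  have hne : ε ≠ 0 := hε.ne'
  have key : dx^2 ≤ 2*dy^2 + 2*s^2 := by
    nlinarith [mul_le_mul htri htri hdx (by linarith : (0:ℝ) ≤ dy + s), sq_nonneg (dy - s)]
  have h2ε : 2*ε*s^2 ≤ 2*s^2 := by nlinarith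
  have hq : (dx^2 + 2*ε*s^2)/(8*ε) ≤ (2*dy^2 + 4*s^2)/(8*ε) :=
    (div_le_div_iff_of_pos_right (by positivity)).mpr (by linarith)
  have e1 : (dx^2 + 2*ε*s^2)/(8*ε) = dx^2/(8*ε) + (1/4)*s^2 := by field_simp; ring
  have e2 : (2*dy^2 + 4*s^2)/(8*ε) = dy^2/(4*ε) + s^2/(2*ε) := by field_simp; ring
  have main : dx^2/(8*ε) + (1/4)*s^2 ≤ dy^2/(4*ε) + s^2/(2*ε) := by linarith
  rw [neg_div, neg_div, neg_div]
  linarith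

lemma exp_ineq3 {ε a d : ℝ} (hε : 0 < ε) (hε1 : ε ≤ 1) (ha : 0 ≤ a) (had : a ≤ d) :
    Real.exp (-d^2/(8*ε)) ≤ Real.exp (-a^2/(16*ε)) * Real.exp (-d^2/16) := by
  rw [← Real.exp_add]
  apply Real.exp_le_exp.mpr
  have h1 : a^2/(16*ε) ≤ d^2/(16*ε) := by gcongr
  have h2 : d^2/16 ≤ d^2/(16*ε) := by
    have h : (1:ℝ)/16 ≤ 1/(16*ε) := one_div_le_one_div_of_le (by positivity) (by linarith)
    calc d^2/16 = (1/16)*d^2 := by ring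
      _ ≤ (1/(16*ε))*d^2 := mul_le_mul_of_nonneg_right h (sq_nonneg d)
      _ = d^2/(16*ε) := by ring
  have h3 : d^2/(16*ε) + d^2/(16*ε) = d^2/(8*ε) := by ring
  have main : a^2/(16*ε) + d^2/16 ≤ d^2/(8*ε) := by linarith
  rw [neg_div, neg_div, neg_div]
  linarith


lemma fbi_bound {n : ℕ} {ε : ℝ} (hε : 0 < ε) (hε1 : ε ≤ 1) {u : Evec n → ℂ}
    (hu : MemLp u 2 (volume : Measure (Evec n))) {K : Set (Evec n)}
    (hsupp : Function.support u ⊆ K) (p : Evec n × Evec n) :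
    ‖fbi ε u p‖ ≤ (cFBI n * ε ^ (-(3 * (n : ℝ)) / 4)) *
      Real.exp (-(infDist p.1 K)^2 / (4 * ε)) *
      ((∫ x : Evec n, ‖u x‖ ^ (2:ℝ)) ^ ((1:ℝ)/2) *
       (∫ x : Evec n, Real.exp (-(1/2 : ℝ) * ‖x‖^2)) ^ ((1:ℝ)/2)) := by
  have hcFBI : 0 < cFBI n :=
    mul_pos (Real.rpow_pos_of_pos two_pos _) (Real.rpow_pos_of_pos Real.pi_pos _)
  have hcε : 0 < cFBI n * ε ^ (-(3 * (n : ℝ)) / 4) :=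
    mul_pos hcFBI (Real.rpow_pos_of_pos hε _)
  have hd1 : 0 ≤ infDist p.1 K := infDist_nonneg
  set g : Evec n → ℝ := fun x => Real.exp (-(1/4:ℝ) * ‖p.1 - x‖^2) with hg
  have hgm : MemLp g 2 (volume : Measure (Evec n)) := gauss_shift_memℒp2 (by norm_num) p.1
  have hpt : ∀ x : Evec n,
      ‖u x * Complex.exp ((Complex.I * (dotR p.2 (p.1 - x) : ℂ)
          - ((‖p.1 - x‖ ^ 2 : ℝ) : ℂ) / 2) / (ε : ℂ))‖
        ≤ Real.exp (-(infDist p.1 K)^2/(4*ε)) * (‖u x‖ * g x) := by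
    intro x
    rw [norm_mul, kernel_norm hε]
    by_cases hx : u x = 0
    · simp only [hx, norm_zero, zero_mul, mul_zero]
      positivity
    · have hdist : infDist p.1 K ≤ ‖p.1 - x‖ := by
        simpa [dist_eq_norm] using infDist_le_dist_of_mem (hsupp (Function.mem_support.mpr hx))
      have hsq : (infDist p.1 K)^2 ≤ ‖p.1 - x‖^2 := by nlinarith [norm_nonneg (p.1 - x)]
      have h := exp_ineq1 hε hε1 hsq (by positivity)
      calc ‖u x‖ * Real.exp (-‖p.1 - x‖^2/(2*ε))
          ≤ ‖u x‖ * (Real.exp (-(infDist p.1 K)^2/(4*ε)) * g x) :=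
            mul_le_mul_of_nonneg_left h (norm_nonneg _)
        _ = Real.exp (-(infDist p.1 K)^2/(4*ε)) * (‖u x‖ * g x) := by ring
  have hmaj : Integrable
      (fun x => Real.exp (-(infDist p.1 K)^2/(4*ε)) * (‖u x‖ * g x))
      (volume : Measure (Evec n)) :=
    (l2_mul_integrable hu.norm hgm).const_mul _
  have hH : ∫ x, ‖u x‖ * g x ≤
      (∫ x : Evec n, ‖u x‖ ^ (2:ℝ)) ^ ((1:ℝ)/2) *
      (∫ x : Evec n, Real.exp (-(1/2 : ℝ) * ‖x‖^2)) ^ ((1:ℝ)/2) := by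
    have hpq : Real.HolderConjugate 2 2 := Real.HolderConjugate.two_two
    have h2 : ENNReal.ofReal (2:ℝ) = 2 := by
      rw [ENNReal.ofReal_ofNat]
    have hH0 := integral_mul_le_Lp_mul_Lq_of_nonneg (μ := (volume : Measure (Evec n)))
      hpq (Filter.Eventually.of_forall fun x => norm_nonneg (u x))
      (Filter.Eventually.of_forall fun x => (Real.exp_pos _).le)
      (show MemLp (fun x => ‖u x‖) (ENNReal.ofReal 2) volume by rw [h2]; exact hu.norm)
      (show MemLp g (ENNReal.ofReal 2) volume by rw [h2]; exact hgm)
    refine hH0.trans (le_of_eq ?_)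
    congr 1
    have : ∀ x : Evec n, g x ^ (2:ℝ) = Real.exp (-(1/2 : ℝ) * ‖p.1 - x‖^2) := by
      intro x
      show (Real.exp _) ^ (2:ℝ) = _
      rw [← Real.exp_mul]
      congr 1
      ring
    rw [show (∫ x : Evec n, g x ^ (2:ℝ))
        = ∫ x : Evec n, Real.exp (-(1/2 : ℝ) * ‖p.1 - x‖^2) from integral_congr_ae
          (Filter.Eventually.of_forall this)]
    rw [gauss_shift_integral (1/2 : ℝ) p.1]
  rw [fbi, norm_mul, Complex.norm_real, Real.norm_of_nonneg hcε.le]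
  calc (cFBI n * ε ^ (-(3 * (n : ℝ)) / 4)) * ‖∫ x : Evec n, u x * _‖
      ≤ (cFBI n * ε ^ (-(3 * (n : ℝ)) / 4)) * ∫ x : Evec n, ‖u x * Complex.exp
          ((Complex.I * (dotR p.2 (p.1 - x) : ℂ)
            - ((‖p.1 - x‖ ^ 2 : ℝ) : ℂ) / 2) / (ε : ℂ))‖ :=
        mul_le_mul_of_nonneg_left (norm_integral_le_integral_norm _) hcε.le
    _ ≤ (cFBI n * ε ^ (-(3 * (n : ℝ)) / 4)) *
        ∫ x : Evec n, Real.exp (-(infDist p.1 K)^2/(4*ε)) * (‖u x‖ * g x) :=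
        mul_le_mul_of_nonneg_left
          (integral_mono_of_nonneg (Filter.Eventually.of_forall fun x => norm_nonneg _) hmaj
            (Filter.Eventually.of_forall hpt)) hcε.le
    _ = (cFBI n * ε ^ (-(3 * (n : ℝ)) / 4)) *
        (Real.exp (-(infDist p.1 K)^2/(4*ε)) * ∫ x, ‖u x‖ * g x) := by
        rw [integral_const_mul]
    _ ≤ (cFBI n * ε ^ (-(3 * (n : ℝ)) / 4)) *
        (Real.exp (-(infDist p.1 K)^2/(4*ε)) *
          ((∫ x : Evec n, ‖u x‖ ^ (2:ℝ)) ^ ((1:ℝ)/2) *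
           (∫ x : Evec n, Real.exp (-(1/2 : ℝ) * ‖x‖^2)) ^ ((1:ℝ)/2))) := by
        refine mul_le_mul_of_nonneg_left (mul_le_mul_of_nonneg_left hH (Real.exp_pos _).le) hcε.le
    _ = _ := by ring

lemma fbiAdj_bound {n : ℕ} {ε : ℝ} (hε : 0 < ε) (hε1 : ε ≤ 1) {u : Evec n → ℂ}
    (hu : MemLp u 2 (volume : Measure (Evec n))) {K : Set (Evec n)}
    (hsupp : Function.support u ⊆ K) {θ : Evec n → ℝ}
    (hθint : Integrable θ (volume : Measure (Evec n))) (x : Evec n) :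
    ‖fbiAdj ε (fun p => (θ p.2 : ℂ) * fbi ε u p) x‖ ≤
      (cFBI n * ε ^ (-(3 * (n : ℝ)) / 4))^2 *
      ((∫ z : Evec n, ‖u z‖ ^ (2:ℝ)) ^ ((1:ℝ)/2) *
       (∫ z : Evec n, Real.exp (-(1/2 : ℝ) * ‖z‖^2)) ^ ((1:ℝ)/2)) *
      ((∫ z : Evec n, Real.exp (-(1/4 : ℝ) * ‖z‖^2)) * (∫ η : Evec n, ‖θ η‖)) *
      Real.exp (-(infDist x K)^2/(8*ε)) := by
  have hcFBI : 0 < cFBI n :=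
    mul_pos (Real.rpow_pos_of_pos two_pos _) (Real.rpow_pos_of_pos Real.pi_pos _)
  have hcε : 0 < cFBI n * ε ^ (-(3 * (n : ℝ)) / 4) :=
    mul_pos hcFBI (Real.rpow_pos_of_pos hε _)
  set cε := cFBI n * ε ^ (-(3 * (n : ℝ)) / 4) with hcεdef
  set NS : ℝ := (∫ z : Evec n, ‖u z‖ ^ (2:ℝ)) ^ ((1:ℝ)/2) *
       (∫ z : Evec n, Real.exp (-(1/2 : ℝ) * ‖z‖^2)) ^ ((1:ℝ)/2) with hNS
  have hNS0 : 0 ≤ NS :=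
    mul_nonneg (Real.rpow_nonneg (integral_nonneg fun z => by positivity) _)
      (Real.rpow_nonneg (integral_nonneg fun z => (Real.exp_pos _).le) _)
  set Ψ : Evec n × Evec n → ℝ := fun p =>
    (cε * NS * Real.exp (-(infDist x K)^2/(8*ε))) *
      (Real.exp (-(1/4 : ℝ) * ‖x - p.1‖^2) * ‖θ p.2‖) with hΨ
  have hpt : ∀ p : Evec n × Evec n,
      ‖(θ p.2 : ℂ) * fbi ε u p * Complex.exp ((Complex.I * (dotR p.2 (x - p.1) : ℂ)
          - ((‖x - p.1‖ ^ 2 : ℝ) : ℂ) / 2) / (ε : ℂ))‖ ≤ Ψ p := by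
    intro p
    rw [norm_mul, norm_mul, kernel_norm hε, Complex.norm_real]
    have hfb := fbi_bound hε hε1 hu hsupp p
    have htri : infDist x K ≤ infDist p.1 K + ‖x - p.1‖ := by
      simpa [dist_eq_norm] using infDist_le_infDist_add_dist (x := x) (y := p.1) (s := K)
    have hexp := exp_ineq2 (dx := infDist x K) (dy := infDist p.1 K) (s := ‖x - p.1‖)
      hε hε1 infDist_nonneg infDist_nonneg (norm_nonneg _) htri
    calc ‖θ p.2‖ * ‖fbi ε u p‖ * Real.exp (-‖x - p.1‖^2/(2*ε))
        ≤ ‖θ p.2‖ * (cε * Real.exp (-(infDist p.1 K)^2/(4*ε)) * NS) *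
            Real.exp (-‖x - p.1‖^2/(2*ε)) := by
          exact mul_le_mul_of_nonneg_right
            (mul_le_mul_of_nonneg_left hfb (norm_nonneg _)) (Real.exp_pos _).le
      _ = (cε * NS) * (‖θ p.2‖ *
            (Real.exp (-(infDist p.1 K)^2/(4*ε)) * Real.exp (-‖x - p.1‖^2/(2*ε)))) := by
          ring
      _ ≤ (cε * NS) * (‖θ p.2‖ *
            (Real.exp (-(infDist x K)^2/(8*ε)) * Real.exp (-(1/4) * ‖x - p.1‖^2))) := by
          refine mul_le_mul_of_nonneg_left (mul_le_mul_of_nonneg_left ?_ (norm_nonneg _))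
            (mul_nonneg hcε.le hNS0)
          calc Real.exp (-(infDist p.1 K)^2/(4*ε)) * Real.exp (-‖x - p.1‖^2/(2*ε))
              = Real.exp (-(infDist p.1 K)^2/(4*ε)) * Real.exp (-(‖x - p.1‖^2)/(2*ε)) := by
                norm_num
            _ ≤ _ := hexp
      _ = Ψ p := by rw [hΨ]; ring
  have hmaj : Integrable Ψ (volume : Measure (Evec n × Evec n)) := by
    apply Integrable.const_mul
    rw [Measure.volume_eq_prod]
    exact (gauss_shift_integrable (by norm_num) x).mul_prod hθint.norm
  have hval : ∫ p : Evec n × Evec n, Ψ p =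
      (cε * NS * Real.exp (-(infDist x K)^2/(8*ε))) *
      ((∫ z : Evec n, Real.exp (-(1/4 : ℝ) * ‖z‖^2)) * (∫ η : Evec n, ‖θ η‖)) := by
    rw [hΨ]
    rw [integral_const_mul]
    congr 1
    have hip := integral_prod_mul (μ := (volume : Measure (Evec n)))
      (ν := (volume : Measure (Evec n)))
      (f := fun z : Evec n => Real.exp (-(1/4 : ℝ) * ‖x - z‖^2))
      (g := fun η : Evec n => ‖θ η‖)
    rw [Measure.volume_eq_prod, hip, gauss_shift_integral (1/4 : ℝ) x]
  rw [fbiAdj, norm_mul, Complex.norm_real, Real.norm_of_nonneg hcε.le]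
  calc cε * ‖∫ p : Evec n × Evec n, ((θ p.2 : ℂ) * fbi ε u p) * Complex.exp
        ((Complex.I * (dotR p.2 (x - p.1) : ℂ)
          - ((‖x - p.1‖ ^ 2 : ℝ) : ℂ) / 2) / (ε : ℂ))‖
      ≤ cε * ∫ p : Evec n × Evec n, ‖((θ p.2 : ℂ) * fbi ε u p) * Complex.exp
        ((Complex.I * (dotR p.2 (x - p.1) : ℂ)
          - ((‖x - p.1‖ ^ 2 : ℝ) : ℂ) / 2) / (ε : ℂ))‖ :=
        mul_le_mul_of_nonneg_left (norm_integral_le_integral_norm _) hcε.le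
    _ ≤ cε * ∫ p : Evec n × Evec n, Ψ p :=
        mul_le_mul_of_nonneg_left
          (integral_mono_of_nonneg (Filter.Eventually.of_forall fun p => norm_nonneg _) hmaj
            (Filter.Eventually.of_forall hpt)) hcε.le
    _ = _ := by rw [hval]; rw [hcεdef]; ring

lemma h_memℒp {n : ℕ} {K : Set (Evec n)} (hK : IsCompact K) (hKne : K.Nonempty) :
    MemLp (fun x : Evec n => Real.exp (-(infDist x K)^2/16)) 2 (volume : Measure (Evec n)) := by
  have hcont : Continuous fun x : Evec n => Real.exp (-(infDist x K)^2/16) :=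
    Real.continuous_exp.comp (((continuous_infDist_pt K).pow 2).neg.div_const 16)
  rw [memLp_two_iff_integrable_sq hcont.aestronglyMeasurable]
  obtain ⟨R, hR⟩ := hK.isBounded.subset_closedBall 0
  set R1 := max R 0 with hR1
  have hR1n : 0 ≤ R1 := le_max_right _ _
  have hKR : K ⊆ closedBall 0 R1 := hR.trans (closedBall_subset_closedBall (le_max_left _ _))
  have hφint : Integrable (fun x : Evec n => Real.exp (-(1/32:ℝ)*‖x‖^2) +
      Set.indicator (closedBall (0:Evec n) (2*R1)) (fun _ => (1:ℝ)) x)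
      (volume : Measure (Evec n)) := by
    refine (gauss_integrable (by norm_num)).add ?_
    exact (integrableOn_const measure_closedBall_lt_top.ne).integrable_indicator
      measurableSet_closedBall
  refine hφint.mono ((hcont.pow 2).aestronglyMeasurable)
    (Filter.Eventually.of_forall fun x => ?_)
  have hind0 : (0:ℝ) ≤ Set.indicator (closedBall (0:Evec n) (2*R1)) (fun _ => (1:ℝ)) x :=
    Set.indicator_nonneg (fun _ _ => zero_le_one) x
  have hφ0 : (0:ℝ) ≤ Real.exp (-(1/32:ℝ)*‖x‖^2) +
      Set.indicator (closedBall (0:Evec n) (2*R1)) (fun _ => (1:ℝ)) x :=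
    add_nonneg (Real.exp_pos _).le hind0
  rw [Real.norm_of_nonneg (by positivity), Real.norm_of_nonneg hφ0]
  have hsq : (Real.exp (-(infDist x K)^2/16))^2 = Real.exp (-(infDist x K)^2/8) := by
    rw [← Real.exp_nat_mul]; congr 1; push_cast; ring
  rw [hsq]
  by_cases hx : ‖x‖ ≤ 2*R1
  · have hind : Set.indicator (closedBall (0:Evec n) (2*R1)) (fun _ => (1:ℝ)) x = 1 :=
      Set.indicator_of_mem (mem_closedBall_zero_iff.mpr hx) _
    have h1 : Real.exp (-(infDist x K)^2/8) ≤ 1 :=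
      Real.exp_le_one_iff.mpr (by nlinarith [sq_nonneg (infDist x K)])
    rw [hind]
    have := (Real.exp_pos (-(1/32:ℝ)*‖x‖^2)).le
    linarith
  · push_neg at hx
    obtain ⟨z, hzK, hzeq⟩ := hK.exists_infDist_eq_dist hKne x
    have hz1 : ‖z‖ ≤ R1 := mem_closedBall_zero_iff.mp (hKR hzK)
    have hxz : ‖x‖ - R1 ≤ dist x z := by
      have htr : dist x 0 ≤ dist x z + dist z 0 := dist_triangle _ _ _
      have h1 : dist x 0 = ‖x‖ := by simp
      have h2 : dist z 0 = ‖z‖ := by simp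
      linarith
    have hd : ‖x‖/2 ≤ infDist x K := by rw [hzeq]; linarith
    have hd2 : ‖x‖^2/4 ≤ (infDist x K)^2 := by nlinarith [norm_nonneg x, infDist_nonneg (x := x) (s := K)]
    have : Real.exp (-(infDist x K)^2/8) ≤ Real.exp (-(1/32:ℝ)*‖x‖^2) :=
      Real.exp_le_exp.mpr (by nlinarith)
    linarith

end Stmt13

open Stmt13 Metric

/-- Let `θ ∈ C_c^∞(ℝⁿ,ℝ)`, `E` measurable and `K` compact with
`dist(K,E) > 0`. There are `C, c > 0` such that for all `ε ∈ (0,1]` and `u ∈ L²` supported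
in `K`, `‖T_ε^*(θ(η) T_ε u)‖_{L²(E)} ≤ C e^{−c/ε} ‖u‖_{L²}`. -/
theorem statement_13 (n : ℕ) (hn : 1 ≤ n)
    (θ : Evec n → ℝ) (hθ : ContDiff ℝ (⊤ : ℕ∞) θ) (hθc : HasCompactSupport θ)
    (E : Set (Evec n)) (hE : MeasurableSet E)
    (K : Set (Evec n)) (hK : IsCompact K)
    (hdist : ∃ a > (0 : ℝ), ∀ x ∈ K, ∀ y ∈ E, a ≤ dist x y) :
    ∃ C > (0 : ℝ), ∃ c > (0 : ℝ), ∀ ε ∈ Set.Ioc (0 : ℝ) 1, ∀ u : Evec n → ℂ,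
      MemLp u 2 (volume : Measure (Evec n)) → Function.support u ⊆ K →
      eLpNorm (fbiAdj ε (fun p => (θ p.2 : ℂ) * fbi ε u p)) 2 (volume.restrict E) ≤
        ENNReal.ofReal (C * Real.exp (-c / ε)) * eLpNorm u 2 volume := by
  obtain ⟨a, ha, haKE⟩ := hdist
  rcases K.eq_empty_or_nonempty with hKe | hKne
  · refine ⟨1, one_pos, 1, one_pos, ?_⟩
    rintro ε ⟨hε, hε1⟩ u hu hsupp
    have hu0 : u = fun _ => (0 : ℂ) := by
      funext z
      by_contra hz
      exact absurd (hsupp (Function.mem_support.mpr hz)) (by simp [hKe])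
    have hfa : fbiAdj ε (fun p => (θ p.2 : ℂ) * fbi ε (fun _ => (0:ℂ)) p)
        = fun _ => (0:ℂ) := by
      funext x
      simp [fbiAdj, fbi]
    rw [hu0, hfa, eLpNorm_zero']
    exact zero_le
  · have hcFBI : 0 < cFBI n :=
      mul_pos (Real.rpow_pos_of_pos two_pos _) (Real.rpow_pos_of_pos Real.pi_pos _)
    have hθint : Integrable θ (volume : Measure (Evec n)) :=
      hθ.continuous.integrable_of_hasCompactSupport hθc
    set SGv : ℝ := (∫ z : Evec n, Real.exp (-(1/2 : ℝ) * ‖z‖^2)) ^ ((1:ℝ)/2) with hSGv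
    set G4v : ℝ := ∫ z : Evec n, Real.exp (-(1/4 : ℝ) * ‖z‖^2) with hG4v
    set THv : ℝ := ∫ η : Evec n, ‖θ η‖ with hTHv
    have hSG0 : (0:ℝ) ≤ SGv :=
      Real.rpow_nonneg (integral_nonneg fun z => (Real.exp_pos _).le) _
    have hG40 : (0:ℝ) ≤ G4v := integral_nonneg fun z => (Real.exp_pos _).le
    have hTH0 : (0:ℝ) ≤ THv := integral_nonneg fun z => norm_nonneg _
    set D2v : ℝ := ((2*n).factorial : ℝ) * ((a^2/32)⁻¹) ^ (2*n) with hD2v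
    have hD20 : (0:ℝ) ≤ D2v := by rw [hD2v]; positivity
    set A1 : ℝ := cFBI n ^ 2 * D2v * SGv * (G4v * THv) with hA1
    have hA10 : 0 ≤ A1 := by
      rw [hA1]
      exact mul_nonneg (mul_nonneg (mul_nonneg (by positivity) hD20) hSG0)
        (mul_nonneg hG40 hTH0)
    have hS0top : eLpNorm (fun x : Evec n => Real.exp (-(infDist x K)^2/16)) 2
        (volume : Measure (Evec n)) ≠ ⊤ := (h_memℒp hK hKne).eLpNorm_ne_top
    set s0 : ℝ := (eLpNorm (fun x : Evec n => Real.exp (-(infDist x K)^2/16)) 2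
        (volume : Measure (Evec n))).toReal with hs0
    have hs00 : (0:ℝ) ≤ s0 := ENNReal.toReal_nonneg
    have hC0 : 0 < A1 * s0 + 1 := by nlinarith [mul_nonneg hA10 hs00]
    refine ⟨A1 * s0 + 1, hC0, a^2/32, by positivity, ?_⟩
    rintro ε ⟨hε, hε1⟩ u hu hsupp
    set Nv : ℝ := (∫ z : Evec n, ‖u z‖ ^ (2:ℝ)) ^ ((1:ℝ)/2) with hNv
    have hN0 : (0:ℝ) ≤ Nv :=
      Real.rpow_nonneg (integral_nonneg fun z => by positivity) _
    set Mv : ℝ := A1 * Real.exp (-(a^2/32)/ε) * Nv with hMv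
    have hM0 : 0 ≤ Mv := by
      rw [hMv]
      exact mul_nonneg (mul_nonneg hA10 (Real.exp_pos _).le) hN0
    have hptE : ∀ x ∈ E, ‖fbiAdj ε (fun p => (θ p.2 : ℂ) * fbi ε u p) x‖ ≤
        Mv * Real.exp (-(infDist x K)^2/16) := by
      intro x hxE
      have hax : a ≤ infDist x K := by
        obtain ⟨z, hzK, hzeq⟩ := hK.exists_infDist_eq_dist hKne x
        rw [hzeq, dist_comm]
        exact haKE z hzK x hxE
      have h1 := fbiAdj_bound hε hε1 hu hsupp hθint x
      have hcsq : (cFBI n * ε ^ (-(3 * (n:ℝ))/4))^2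
          = cFBI n ^2 * ε ^ (-(3*(n:ℝ))/2) := by
        have h2 : ((ε ^ (-(3*(n:ℝ))/4)) : ℝ)^(2:ℕ) = ε ^ (-(3*(n:ℝ))/2) := by
          rw [← Real.rpow_natCast (ε ^ (-(3*(n:ℝ))/4)) 2, ← Real.rpow_mul hε.le]
          congr 1
          push_cast
          ring
        rw [mul_pow, h2]
      have hkey : ε ^ (-(3*(n:ℝ))/2) ≤ D2v * Real.exp ((a^2/32) / ε) := by
        rw [hD2v]
        refine key_eps (by positivity) hε hε1 ?_
        push_cast
        have h3 : (0:ℝ) ≤ (n:ℝ) := Nat.cast_nonneg n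
        linarith
      have hcomb : ε ^ (-(3*(n:ℝ))/2) * Real.exp (-a^2/(16*ε)) ≤
          D2v * Real.exp (-(a^2/32)/ε) := by
        have he : Real.exp ((a^2/32) / ε) * Real.exp (-a^2/(16*ε)) =
            Real.exp (-(a^2/32)/ε) := by
          rw [← Real.exp_add]
          congr 1
          field_simp
          ring
        calc ε ^ (-(3*(n:ℝ))/2) * Real.exp (-a^2/(16*ε))
            ≤ (D2v * Real.exp ((a^2/32) / ε)) * Real.exp (-a^2/(16*ε)) :=
              mul_le_mul_of_nonneg_right hkey (Real.exp_pos _).le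
          _ = D2v * (Real.exp ((a^2/32) / ε) * Real.exp (-a^2/(16*ε))) := by ring
          _ = D2v * Real.exp (-(a^2/32)/ε) := by rw [he]
      have hd3 := exp_ineq3 hε hε1 ha.le hax
      have hNS0 : (0:ℝ) ≤ (∫ z : Evec n, ‖u z‖ ^ (2:ℝ)) ^ ((1:ℝ)/2) *
          (∫ z : Evec n, Real.exp (-(1/2 : ℝ) * ‖z‖^2)) ^ ((1:ℝ)/2) := by
        rw [← hSGv]
        exact mul_nonneg (hNv ▸ hN0) hSG0
      have hGT0 : (0:ℝ) ≤ (∫ z : Evec n, Real.exp (-(1/4 : ℝ) * ‖z‖^2)) *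
          (∫ η : Evec n, ‖θ η‖) := by
        rw [← hG4v, ← hTHv]
        exact mul_nonneg hG40 hTH0
      calc ‖fbiAdj ε (fun p => (θ p.2 : ℂ) * fbi ε u p) x‖
          ≤ (cFBI n * ε ^ (-(3 * (n : ℝ)) / 4))^2 *
            ((∫ z : Evec n, ‖u z‖ ^ (2:ℝ)) ^ ((1:ℝ)/2) *
             (∫ z : Evec n, Real.exp (-(1/2 : ℝ) * ‖z‖^2)) ^ ((1:ℝ)/2)) *
            ((∫ z : Evec n, Real.exp (-(1/4 : ℝ) * ‖z‖^2)) * (∫ η : Evec n, ‖θ η‖)) *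
            Real.exp (-(infDist x K)^2/(8*ε)) := h1
        _ ≤ (cFBI n * ε ^ (-(3 * (n : ℝ)) / 4))^2 *
            ((∫ z : Evec n, ‖u z‖ ^ (2:ℝ)) ^ ((1:ℝ)/2) *
             (∫ z : Evec n, Real.exp (-(1/2 : ℝ) * ‖z‖^2)) ^ ((1:ℝ)/2)) *
            ((∫ z : Evec n, Real.exp (-(1/4 : ℝ) * ‖z‖^2)) * (∫ η : Evec n, ‖θ η‖)) *
            (Real.exp (-a^2/(16*ε)) * Real.exp (-(infDist x K)^2/16)) := by
            refine mul_le_mul_of_nonneg_left hd3 ?_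
            exact mul_nonneg (mul_nonneg (by positivity) hNS0) hGT0
        _ = (cFBI n ^2 *
            ((∫ z : Evec n, ‖u z‖ ^ (2:ℝ)) ^ ((1:ℝ)/2) *
             (∫ z : Evec n, Real.exp (-(1/2 : ℝ) * ‖z‖^2)) ^ ((1:ℝ)/2)) *
            ((∫ z : Evec n, Real.exp (-(1/4 : ℝ) * ‖z‖^2)) * (∫ η : Evec n, ‖θ η‖)) *
            Real.exp (-(infDist x K)^2/16)) *
            (ε ^ (-(3*(n:ℝ))/2) * Real.exp (-a^2/(16*ε))) := by
            rw [hcsq]; ring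
        _ ≤ (cFBI n ^2 *
            ((∫ z : Evec n, ‖u z‖ ^ (2:ℝ)) ^ ((1:ℝ)/2) *
             (∫ z : Evec n, Real.exp (-(1/2 : ℝ) * ‖z‖^2)) ^ ((1:ℝ)/2)) *
            ((∫ z : Evec n, Real.exp (-(1/4 : ℝ) * ‖z‖^2)) * (∫ η : Evec n, ‖θ η‖)) *
            Real.exp (-(infDist x K)^2/16)) *
            (D2v * Real.exp (-(a^2/32)/ε)) := by
            refine mul_le_mul_of_nonneg_left hcomb ?_
            exact mul_nonneg (mul_nonneg (mul_nonneg (by positivity) hNS0) hGT0)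
              (Real.exp_pos _).le
        _ = Mv * Real.exp (-(infDist x K)^2/16) := by
            rw [hMv, hA1, hNv, hSGv, hG4v, hTHv]
            ring
    have hmono : eLpNorm (fbiAdj ε (fun p => (θ p.2 : ℂ) * fbi ε u p)) 2
        (volume.restrict E) ≤
        eLpNorm (fun x : Evec n => Mv * Real.exp (-(infDist x K)^2/16)) 2
        (volume.restrict E) := by
      apply eLpNorm_mono_ae
      rw [ae_restrict_iff' hE]
      refine Filter.Eventually.of_forall fun x hx => ?_
      rw [Real.norm_of_nonneg (mul_nonneg hM0 (Real.exp_pos _).le)]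
      exact hptE x hx
    have heq : (fun x : Evec n => Mv * Real.exp (-(infDist x K)^2/16))
        = Mv • (fun x : Evec n => Real.exp (-(infDist x K)^2/16)) := rfl
    have hsmul := eLpNorm_const_smul (𝕜 := ℝ) (c := Mv)
      (fun x : Evec n => Real.exp (-(infDist x K)^2/16)) 2 (volume.restrict E)
    have hNvLp : ENNReal.ofReal Nv = eLpNorm u 2 volume := by
      rw [hu.eLpNorm_eq_integral_rpow_norm (by norm_num) (by norm_num)]
      congr 1
      rw [hNv]
      norm_num
    calc eLpNorm (fbiAdj ε (fun p => (θ p.2 : ℂ) * fbi ε u p)) 2 (volume.restrict E)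
        ≤ eLpNorm (fun x : Evec n => Mv * Real.exp (-(infDist x K)^2/16)) 2
          (volume.restrict E) := hmono
      _ = ‖Mv‖ₑ * eLpNorm (fun x : Evec n => Real.exp (-(infDist x K)^2/16)) 2
          (volume.restrict E) := by rw [heq, hsmul]
      _ ≤ ENNReal.ofReal Mv * eLpNorm (fun x : Evec n => Real.exp (-(infDist x K)^2/16)) 2
          volume :=
          mul_le_mul' (le_of_eq (Real.enorm_eq_ofReal hM0))
            (eLpNorm_mono_measure _ Measure.restrict_le_self)
      _ = ENNReal.ofReal (A1 * Real.exp (-(a^2/32)/ε)) * ENNReal.ofReal Nv *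
          ENNReal.ofReal s0 := by
          rw [← ENNReal.ofReal_toReal hS0top, ← hs0, hMv,
            ENNReal.ofReal_mul (mul_nonneg hA10 (Real.exp_pos _).le)]
      _ = (ENNReal.ofReal (A1 * Real.exp (-(a^2/32)/ε)) * ENNReal.ofReal s0) *
          ENNReal.ofReal Nv := by ring
      _ ≤ ENNReal.ofReal ((A1 * s0 + 1) * Real.exp (-(a^2/32)/ε)) *
          eLpNorm u 2 volume := by
          rw [← hNvLp]
          refine mul_le_mul' ?_ le_rfl
          rw [← ENNReal.ofReal_mul (mul_nonneg hA10 (Real.exp_pos _).le)]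
          refine ENNReal.ofReal_le_ofReal ?_
          have hle : A1 * s0 ≤ A1 * s0 + 1 := by linarith
          calc A1 * Real.exp (-(a^2/32)/ε) * s0
              = (A1 * s0) * Real.exp (-(a^2/32)/ε) := by ring
            _ ≤ (A1 * s0 + 1) * Real.exp (-(a^2/32)/ε) :=
              mul_le_mul_of_nonneg_right hle (Real.exp_pos _).le


end
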